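/- Let ℋ be a finite-dimensional complex Hilbert space, H ∈ B(ℋ) self-adjoint, σ_*(H) ⊆ σ(H) a subset of the eigenvalues with diam(σ_*(H)) ≤ δ̃ for some δ̃ ≥ 0, and let P_* be the spectral projection of H associated with σ_*(H). Let W : ℝ → ℂ be Lebesgue integrable with Ŵ(ω) = 0 for all ω ∈ [−δ̃, δ̃]. Then P_*·(∫_ℝ W(s)·e^{iHs}·A·e^{−iHs} ds)·P_* = 0 for every A ∈ B(ℋ). (Lemma D.1, second part.) -/

import Mathlib

open scoped BigOperators ComplexConjugate

noncomputable section

variable {ℋ : Type*} [NormedAddCommGroup ℋ] [InnerProductSpace ℂ ℋ] [FiniteDimensional ℂ ℋ]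

/-- The orthogonal projection onto a subspace `K`, as an operator on `ℋ`. -/
noncomputable def orthProj (K : Submodule ℂ ℋ) : ℋ →L[ℂ] ℋ :=
  K.subtypeL.comp K.orthogonalProjectionOnto

/-- The spectral projection of `H` associated with a set `S ⊆ ℝ`: the orthogonal projection
onto the span of all eigenvectors of `H` with eigenvalue in `S`. -/
noncomputable def spectralProj (H : ℋ →L[ℂ] ℋ) (S : Set ℝ) : ℋ →L[ℂ] ℋ :=
  orthProj (⨆ μ ∈ S, Module.End.eigenspace (H : ℋ →ₗ[ℂ] ℋ) (μ : ℂ))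

/-- An operator `A` is off-diagonal with respect to a projection `P` if `PAP = 0` and
`(1−P)A(1−P) = 0`. -/
def IsOffDiagonal (P A : ℋ →L[ℂ] ℋ) : Prop :=
  P * A * P = 0 ∧ (1 - P) * A * (1 - P) = 0

/-- The set of (real) eigenvalues of `H`. -/
def realEigenvalues (H : ℋ →L[ℂ] ℋ) : Set ℝ :=
  {μ : ℝ | Module.End.HasEigenvalue (H : ℋ →ₗ[ℂ] ℋ) (μ : ℂ)}

/-- The Fourier transform `Ŵ(ω) = (2π)^{-1/2} ∫ W(s) e^{−iωs} ds`. -/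
noncomputable def fhat (W : ℝ → ℂ) (ω : ℝ) : ℂ :=
  (Real.sqrt (2 * Real.pi) : ℂ)⁻¹ * ∫ s : ℝ, Complex.exp (-(Complex.I * ω * s)) * W s

/-! If `H x = ν x` and `H z = μ z`, then `⟪x, e^{iHs} A e^{-iHs} z⟫ = e^{-i(μ-ν)s} ⟪x, A z⟫`, so
integrating against `W` gives `√(2π) Ŵ(μ - ν) ⟪x, A z⟫`. For `μ, ν ∈ σ_*` we have `|μ - ν| ≤ δ̃`,
so this vanishes: the integral maps the range of `P_*` into its orthogonal complement, which
`P_*` kills. -/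

open scoped InnerProductSpace
open MeasureTheory

section

variable {E : Type*} [NormedAddCommGroup E] [InnerProductSpace ℂ E] [CompleteSpace E]

theorem exp_apply_of_apply_eq_smul {L : E →L[ℂ] E} {c : ℂ} {z : E} (h : L z = c • z) :
    NormedSpace.exp L z = Complex.exp c • z := by
  have hpow (n : ℕ) : (L ^ n) z = c ^ n • z := by
    induction n with
    | zero => simp
    | succ n ih => rw [pow_succ', mul_apply_eq_comp, ih, map_smul, h, smul_smul, pow_succ]
  have hL := (NormedSpace.exp_series_hasSum_exp' (𝕂 := ℂ) L).mapL (ContinuousLinearMap.apply ℂ E z)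
  have hc := (NormedSpace.exp_series_hasSum_exp' (𝕂 := ℂ) c).smul_const z
  rw [Complex.exp_eq_exp_ℂ]
  refine hL.unique ?_
  simpa [hpow, smul_smul] using hc

theorem inner_exp_apply_of_adjoint_apply_eq_smul {L : E →L[ℂ] E} {c : ℂ} {x : E}
    (h : L.adjoint x = c • x) (w : E) :
    ⟪x, NormedSpace.exp L w⟫_ℂ = Complex.exp (conj c) * ⟪x, w⟫_ℂ := by
  rw [← ContinuousLinearMap.adjoint_inner_left, ← ContinuousLinearMap.star_eq_adjoint,
    NormedSpace.star_exp, ContinuousLinearMap.star_eq_adjoint, exp_apply_of_apply_eq_smul h,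
    inner_smul_left, ← Complex.exp_conj]

def heisenbergEvolution (H A : E →L[ℂ] E) (s : ℝ) : E →L[ℂ] E :=
  NormedSpace.exp ((s : ℂ) • (Complex.I • H)) * A * NormedSpace.exp ((-s : ℂ) • (Complex.I • H))

theorem inner_heisenbergEvolution_apply_of_eigen {H : E →L[ℂ] E} (hH : IsSelfAdjoint H)
    {μ ν : ℝ} {x z : E} (hx : H x = (ν : ℂ) • x) (hz : H z = (μ : ℂ) • z) (A : E →L[ℂ] E)
    (s : ℝ) :
    ⟪x, heisenbergEvolution H A s z⟫_ℂ =
      Complex.exp (-(Complex.I * (μ - ν : ℝ) * s)) * ⟪x, A z⟫_ℂ := by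
  have hx' : ((s : ℂ) • (Complex.I • H)).adjoint x = (-(s * Complex.I * ν) : ℂ) • x := by
    rw [← ContinuousLinearMap.star_eq_adjoint, star_smul, star_smul, hH.star_eq]
    simp only [smul_apply, hx, smul_smul, RCLike.star_def, Complex.conj_ofReal, Complex.conj_I]
    ring_nf
  have hz' : ((-s : ℂ) • (Complex.I • H)) z = (-(s * Complex.I * μ) : ℂ) • z := by
    simp only [smul_apply, hz, smul_smul]
    ring_nf
  rw [heisenbergEvolution, mul_apply_eq_comp, mul_apply_eq_comp,
    inner_exp_apply_of_adjoint_apply_eq_smul hx', exp_apply_of_apply_eq_smul hz', map_smul,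
    inner_smul_right, ← mul_assoc, ← Complex.exp_add]
  congr 2
  simp only [map_neg, map_mul, Complex.conj_ofReal, Complex.conj_I]
  push_cast
  ring

theorem inner_integral_heisenbergEvolution_apply_of_eigen {H : E →L[ℂ] E} (hH : IsSelfAdjoint H)
    {μ ν : ℝ} {x z : E} (hx : H x = (ν : ℂ) • x) (hz : H z = (μ : ℂ) • z) (A : E →L[ℂ] E)
    {W : ℝ → ℂ}
    (hint : Integrable fun s : ℝ => W s • heisenbergEvolution H A s) :
    ⟪x, (∫ s : ℝ, W s • heisenbergEvolution H A s) z⟫_ℂ =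
      Real.sqrt (2 * Real.pi) * fhat W (μ - ν) * ⟪x, A z⟫_ℂ := by
  have h2π : (Real.sqrt (2 * Real.pi) : ℂ) ≠ 0 := by
    exact_mod_cast (Real.sqrt_pos.mpr (by positivity)).ne'
  rw [ContinuousLinearMap.integral_apply hint, ← integral_inner (hint.apply_continuousLinearMap z)]
  simp only [smul_apply, inner_smul_right, inner_heisenbergEvolution_apply_of_eigen hH hx hz]
  rw [fhat, mul_inv_cancel_left₀ h2π, ← integral_mul_const]
  congr 1 with s
  ring

theorem inner_integral_heisenbergEvolution_apply_eq_zero {H : E →L[ℂ] E} (hH : IsSelfAdjoint H)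
    {μ ν : ℝ} {x z : E} (hx : H x = (ν : ℂ) • x) (hz : H z = (μ : ℂ) • z) (A : E →L[ℂ] E)
    {W : ℝ → ℂ}
    (hW : fhat W (μ - ν) = 0) :
    ⟪x, (∫ s : ℝ, W s • heisenbergEvolution H A s) z⟫_ℂ = 0 := by
  by_cases hint : Integrable fun s : ℝ => W s • heisenbergEvolution H A s
  · rw [inner_integral_heisenbergEvolution_apply_of_eigen hH hx hz A hint, hW, mul_zero, zero_mul]
  · rw [integral_undef hint, zero_apply, inner_zero_right]

end

theorem Submodule.isOrtho_biSup_map_biSup {E : Type*} [NormedAddCommGroup E]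
    [InnerProductSpace ℂ E] {ι : Type*} {V : ι → Submodule ℂ E} {S : Set ι} {T : E →ₗ[ℂ] E}
    (h : ∀ i ∈ S, ∀ j ∈ S, V i ⟂ (V j).map T) :
    (⨆ i ∈ S, V i) ⟂ (⨆ j ∈ S, V j).map T := by
  simp only [Submodule.map_iSup, Submodule.isOrtho_iSup_left, Submodule.isOrtho_iSup_right]
  exact fun j hj i hi => h i hi j hj

theorem orthProj_mul_mul_orthProj_eq_zero {K : Submodule ℂ ℋ} {T : ℋ →L[ℂ] ℋ}
    (h : K ⟂ K.map (T : ℋ →ₗ[ℂ] ℋ)) : orthProj K * T * orthProj K = 0 := by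
  ext v
  have hT : T (orthProj K v) ∈ Kᗮ := h.ge ⟨_, (K.orthogonalProjectionOnto v).2, rfl⟩
  rw [mul_apply_eq_comp, mul_apply_eq_comp, zero_apply]
  rw [orthProj] at hT ⊢
  rw [ContinuousLinearMap.comp_apply, K.orthogonalProjectionOnto_apply_of_mem_orthogonal hT,
    map_zero]

theorem statement16 (H : ℋ →L[ℂ] ℋ) (hH : IsSelfAdjoint H)
    (σstar : Set ℝ)
    (δ : ℝ)
    (hdiam : ∀ μ ∈ σstar, ∀ ν ∈ σstar, |μ - ν| ≤ δ)
    (W : ℝ → ℂ)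
    (hW : ∀ ω ∈ Set.Icc (-δ) δ, fhat W ω = 0)
    (A : ℋ →L[ℂ] ℋ) :
    spectralProj H σstar *
      (∫ s : ℝ, W s • (NormedSpace.exp ((s : ℂ) • (Complex.I • H)) * A *
        NormedSpace.exp ((-s : ℂ) • (Complex.I • H)))) *
      spectralProj H σstar = 0 := by
  refine orthProj_mul_mul_orthProj_eq_zero
    (Submodule.isOrtho_biSup_map_biSup fun ν hν μ hμ => ?_)
  rw [Submodule.isOrtho_iff_inner_eq]
  rintro x hx _ ⟨z, hz, rfl⟩
  have hμν : μ - ν ∈ Set.Icc (-δ) δ := abs_le.mp (hdiam μ hμ ν hν)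
  exact inner_integral_heisenbergEvolution_apply_eq_zero hH (by simpa using hx) (by simpa using hz)
    A (hW _ hμν)
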